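/- arXiv:2005.05934 — 2 statements merged into one kernel-verified Lean document; each statement's English description precedes it below -/
import Mathlib

section
/- MPL[E] is strictly more expressive than HyperCTL*, even when restricted to bisimulation-invariant properties: there exists a closed MPL[E] sentence ψ whose class of AP-labeled tree models is bisimulation-invariant, such that no HyperCTL* formula φ satisfies (for every AP-labeled tree T, T ⊨ φ iff T ⊨ ψ). -/
set_option linter.unusedVariables false

/-- A trace over a set `AP` of atomic propositions: an infinite sequence of subsets of `AP`. -/
abbrev Trace (AP : Type) := ℕ → Set AP

/-! ### HyperQPTL -/

inductive HQPTL (AP : Type) : Type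
  | atom  : AP → ℕ → HQPTL AP          -- a_π
  | prop  : ℕ → HQPTL AP               -- q
  | not   : HQPTL AP → HQPTL AP
  | or    : HQPTL AP → HQPTL AP → HQPTL AP
  | next  : HQPTL AP → HQPTL AP
  | untl  : HQPTL AP → HQPTL AP → HQPTL AP
  | exTr  : ℕ → HQPTL AP → HQPTL AP    -- ∃π
  | allTr : ℕ → HQPTL AP → HQPTL AP    -- ∀π
  | exPr  : ℕ → HQPTL AP → HQPTL AP    -- ∃q
  | allPr : ℕ → HQPTL AP → HQPTL AP    -- ∀q

namespace HQPTL

variable {AP : Type}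

/-- Satisfaction `Π,i ⊨_T φ` for HyperQPTL.  `V` assigns traces (in `T`) to trace
variables, `P` assigns to each propositional variable a trace over `{q}`
(modelled as `ℕ → Prop`). -/
def sat (T : Set (Trace AP)) : (ℕ → Trace AP) → (ℕ → ℕ → Prop) → ℕ → HQPTL AP → Prop
  | V, P, i, atom a π => a ∈ V π i
  | V, P, i, prop q => P q i
  | V, P, i, not φ => ¬ sat T V P i φ
  | V, P, i, or φ ψ => sat T V P i φ ∨ sat T V P i ψ
  | V, P, i, next φ => sat T V P (i + 1) φ
  | V, P, i, untl φ ψ =>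
      ∃ j, i ≤ j ∧ sat T V P j ψ ∧ ∀ k, i ≤ k → k < j → sat T V P k φ
  | V, P, i, exTr π φ => ∃ t ∈ T, sat T (Function.update V π t) P i φ
  | V, P, i, allTr π φ => ∀ t ∈ T, sat T (Function.update V π t) P i φ
  | V, P, i, exPr q φ => ∃ p : ℕ → Prop, sat T V (Function.update P q p) i φ
  | V, P, i, allPr q φ => ∀ p : ℕ → Prop, sat T V (Function.update P q p) i φ

/-- `T ⊨ φ`: satisfaction at time 0 with the empty (default) assignment. -/
def models (T : Set (Trace AP)) (φ : HQPTL AP) : Prop :=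
  sat T (fun _ _ => (∅ : Set AP)) (fun _ _ => False) 0 φ

/-- quantifier-free HyperQPTL formulas -/
def qfree : HQPTL AP → Prop
  | atom _ _ => True
  | prop _ => True
  | not φ => qfree φ
  | or φ ψ => qfree φ ∧ qfree ψ
  | next φ => qfree φ
  | untl φ ψ => qfree φ ∧ qfree ψ
  | _ => False

/-- prenex form: a prefix of (trace or propositional) quantifiers followed by a
quantifier-free body; this is exactly the shape of formulas produced by the
HyperQPTL grammar. -/
def prenex : HQPTL AP → Prop
  | exTr _ φ => prenex φ
  | allTr _ φ => prenex φ
  | exPr _ φ => prenex φ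
  | allPr _ φ => prenex φ
  | φ => qfree φ

/-- the ∀* fragment: only universal trace quantifiers in the prefix,
propositional quantifiers may occur arbitrarily in the prefix. -/
def allFrag : HQPTL AP → Prop
  | allTr _ φ => allFrag φ
  | exPr _ φ => allFrag φ
  | allPr _ φ => allFrag φ
  | φ => qfree φ

/-- trailing block `Q⃗₂ ψ` of propositional quantifiers over a quantifier-free body -/
def eaFrag4 : HQPTL AP → Prop
  | exPr _ φ => eaFrag4 φ
  | allPr _ φ => eaFrag4 φ
  | φ => qfree φ

/-- `∀π′₁…∀π′ₘ Q⃗₂ ψ` -/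
def eaFrag3 : HQPTL AP → Prop
  | allTr _ φ => eaFrag3 φ
  | φ => eaFrag4 φ

/-- `Q⃗₁ ∀π′₁…∀π′ₘ Q⃗₂ ψ` -/
def eaFrag2 : HQPTL AP → Prop
  | exPr _ φ => eaFrag2 φ
  | allPr _ φ => eaFrag2 φ
  | φ => eaFrag3 φ

/-- `∃π₁…∃πₙ Q⃗₁ ∀π′₁…∀π′ₘ Q⃗₂ ψ` -/
def eaFrag1 : HQPTL AP → Prop
  | exTr _ φ => eaFrag1 φ
  | φ => eaFrag2 φ

/-- the ∃*∀* fragment: `Q⃗₀ ∃π₁…∃πₙ Q⃗₁ ∀π′₁…∀π′ₘ Q⃗₂ ψ` with `ψ` quantifier-free -/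
def eaFrag : HQPTL AP → Prop
  | exPr _ φ => eaFrag φ
  | allPr _ φ => eaFrag φ
  | φ => eaFrag1 φ

/-- a HyperQPTL formula is satisfiable if some nonempty trace set satisfies it -/
def satisfiable (φ : HQPTL AP) : Prop :=
  ∃ T : Set (Trace AP), T.Nonempty ∧ models T φ

/-- a natural injective encoding of HyperQPTL formulas over `Fin k` as naturals -/
def enc {k : ℕ} : HQPTL (Fin k) → ℕ
  | atom a π => Nat.pair 0 (Nat.pair a.val π)
  | prop q => Nat.pair 1 q
  | not φ => Nat.pair 2 (enc φ)
  | or φ ψ => Nat.pair 3 (Nat.pair (enc φ) (enc ψ))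
  | next φ => Nat.pair 4 (enc φ)
  | untl φ ψ => Nat.pair 5 (Nat.pair (enc φ) (enc ψ))
  | exTr π φ => Nat.pair 6 (Nat.pair π (enc φ))
  | allTr π φ => Nat.pair 7 (Nat.pair π (enc φ))
  | exPr q φ => Nat.pair 8 (Nat.pair q (enc φ))
  | allPr q φ => Nat.pair 9 (Nat.pair q (enc φ))

end HQPTL

/-! ### QPTL -/

inductive QPTL (AP : Type) : Type
  | atom  : AP → QPTL AP
  | prop  : ℕ → QPTL AP
  | not   : QPTL AP → QPTL AP
  | or    : QPTL AP → QPTL AP → QPTL AP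
  | next  : QPTL AP → QPTL AP
  | untl  : QPTL AP → QPTL AP → QPTL AP
  | exPr  : ℕ → QPTL AP → QPTL AP
  | allPr : ℕ → QPTL AP → QPTL AP

namespace QPTL

variable {AP : Type}

/-- QPTL satisfaction over a single trace `t`. -/
def sat (t : Trace AP) : (ℕ → ℕ → Prop) → ℕ → QPTL AP → Prop
  | P, i, atom a => a ∈ t i
  | P, i, prop q => P q i
  | P, i, not φ => ¬ sat t P i φ
  | P, i, or φ ψ => sat t P i φ ∨ sat t P i ψ
  | P, i, next φ => sat t P (i + 1) φ
  | P, i, untl φ ψ => ∃ j, i ≤ j ∧ sat t P j ψ ∧ ∀ k, i ≤ k → k < j → sat t P k φ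
  | P, i, exPr q φ => ∃ p : ℕ → Prop, sat t (Function.update P q p) i φ
  | P, i, allPr q φ => ∀ p : ℕ → Prop, sat t (Function.update P q p) i φ

def models (t : Trace AP) (φ : QPTL AP) : Prop :=
  sat t (fun _ _ => False) 0 φ

def satisfiable (φ : QPTL AP) : Prop := ∃ t : Trace AP, models t φ

end QPTL

/-- The QPTL formula obtained from a HyperQPTL formula by removing all trace
quantifiers and replacing every atom `a_π` by the atom `a`. -/
def HQPTL.strip {AP : Type} : HQPTL AP → QPTL AP
  | .atom a _ => .atom a
  | .prop q => .prop q
  | .not φ => .not φ.strip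
  | .or φ ψ => .or φ.strip ψ.strip
  | .next φ => .next φ.strip
  | .untl φ ψ => .untl φ.strip ψ.strip
  | .exTr _ φ => φ.strip
  | .allTr _ φ => φ.strip
  | .exPr q φ => .exPr q φ.strip
  | .allPr q φ => .allPr q φ.strip

/-! ### FO[<,E] -/

inductive FOE (AP : Type) : Type
  | patom : AP → ℕ → FOE AP            -- P_a(x)
  | lt    : ℕ → ℕ → FOE AP             -- x < y
  | eq    : ℕ → ℕ → FOE AP             -- x = y
  | el    : ℕ → ℕ → FOE AP             -- E(x,y)
  | not   : FOE AP → FOE AP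
  | or    : FOE AP → FOE AP → FOE AP
  | ex    : ℕ → FOE AP → FOE AP        -- ∃x

namespace FOE

variable {AP : Type}

/-- First-order satisfaction over a trace set `T`; first-order variables range
over `T × ℕ`, modelled by valuations `v : ℕ → Trace AP × ℕ` (quantifiers
restrict the first component to `T`). -/
def sat (T : Set (Trace AP)) : (ℕ → Trace AP × ℕ) → FOE AP → Prop
  | v, patom a x => a ∈ (v x).1 (v x).2
  | v, lt x y => (v x).1 = (v y).1 ∧ (v x).2 < (v y).2
  | v, eq x y => v x = v y
  | v, el x y => (v x).2 = (v y).2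
  | v, not φ => ¬ sat T v φ
  | v, or φ ψ => sat T v φ ∨ sat T v ψ
  | v, ex x φ => ∃ p : Trace AP × ℕ, p.1 ∈ T ∧ sat T (Function.update v x p) φ

def free : FOE AP → Finset ℕ
  | patom _ x => {x}
  | lt x y => {x, y}
  | eq x y => {x, y}
  | el x y => {x, y}
  | not φ => free φ
  | or φ ψ => free φ ∪ free ψ
  | ex x φ => (free φ).erase x

def closed (φ : FOE AP) : Prop := φ.free = ∅

def models (T : Set (Trace AP)) (φ : FOE AP) : Prop :=
  sat T (fun _ => (fun _ => (∅ : Set AP), 0)) φ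

end FOE

/-! ### S1S[E] -/

inductive S1STerm : Type
  | var  : ℕ → S1STerm
  | min  : ℕ → S1STerm
  | succ : S1STerm → S1STerm

namespace S1STerm

/-- value of an S1S[E] term under a first-order valuation -/
def val {AP : Type} (v : ℕ → Trace AP × ℕ) : S1STerm → Trace AP × ℕ
  | var x => v x
  | min x => ((v x).1, 0)
  | succ τ => ((val v τ).1, (val v τ).2 + 1)

def fv : S1STerm → Finset ℕ
  | var x => {x}
  | min x => {x}
  | succ τ => fv τ

def enc : S1STerm → ℕ
  | var x => Nat.pair 0 x
  | min x => Nat.pair 1 x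
  | succ τ => Nat.pair 2 τ.enc

end S1STerm

/-- S1S[E] formulas: second-order variables are either quantifiable variables
(indexed by `ℕ`, via `Sum.inl`) or the designated free variables `X_a`
for `a ∈ AP` (via `Sum.inr`). -/
inductive S1SE (AP : Type) : Type
  | mem  : S1STerm → ℕ ⊕ AP → S1SE AP   -- τ ∈ X
  | eq   : S1STerm → S1STerm → S1SE AP   -- τ = τ'
  | el   : S1STerm → S1STerm → S1SE AP   -- E(τ,τ')
  | not  : S1SE AP → S1SE AP
  | or   : S1SE AP → S1SE AP → S1SE AP
  | exFO : ℕ → S1SE AP → S1SE AP         -- ∃x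
  | exSO : ℕ → S1SE AP → S1SE AP         -- ∃X

namespace S1SE

variable {AP : Type}

/-- S1S[E] satisfaction over a trace set `T`: first-order variables range over
`T × ℕ`, second-order variables over subsets of `T × ℕ`; each designated
variable `X_a` is interpreted as `{(t,n) ∈ T × ℕ | a ∈ t[n]}`. -/
def sat (T : Set (Trace AP)) :
    (ℕ → Trace AP × ℕ) → (ℕ → Set (Trace AP × ℕ)) → S1SE AP → Prop
  | v1, v2, mem τ (Sum.inl X) => τ.val v1 ∈ v2 X
  | v1, v2, mem τ (Sum.inr a) =>
      (τ.val v1).1 ∈ T ∧ a ∈ (τ.val v1).1 (τ.val v1).2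
  | v1, v2, eq τ σ => τ.val v1 = σ.val v1
  | v1, v2, el τ σ => (τ.val v1).2 = (σ.val v1).2
  | v1, v2, not φ => ¬ sat T v1 v2 φ
  | v1, v2, or φ ψ => sat T v1 v2 φ ∨ sat T v1 v2 ψ
  | v1, v2, exFO x φ =>
      ∃ p : Trace AP × ℕ, p.1 ∈ T ∧ sat T (Function.update v1 x p) v2 φ
  | v1, v2, exSO X φ =>
      ∃ A : Set (Trace AP × ℕ), (∀ p ∈ A, p.1 ∈ T) ∧
        sat T v1 (Function.update v2 X A) φ

def freeFO : S1SE AP → Finset ℕ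
  | mem τ _ => τ.fv
  | eq τ σ => τ.fv ∪ σ.fv
  | el τ σ => τ.fv ∪ σ.fv
  | not φ => freeFO φ
  | or φ ψ => freeFO φ ∪ freeFO ψ
  | exFO x φ => (freeFO φ).erase x
  | exSO _ φ => freeFO φ

def freeSO : S1SE AP → Finset ℕ
  | mem _ (Sum.inl X) => {X}
  | mem _ (Sum.inr _) => ∅
  | eq _ _ => ∅
  | el _ _ => ∅
  | not φ => freeSO φ
  | or φ ψ => freeSO φ ∪ freeSO ψ
  | exFO _ φ => freeSO φ
  | exSO X φ => (freeSO φ).erase X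

/-- a closed S1S[E] formula: free variables only among the `X_a` -/
def closed (φ : S1SE AP) : Prop := φ.freeFO = ∅ ∧ φ.freeSO = ∅

def models (T : Set (Trace AP)) (φ : S1SE AP) : Prop :=
  sat T (fun _ => (fun _ => (∅ : Set AP), 0)) (fun _ => (∅ : Set (Trace AP × ℕ))) φ

/-- a natural injective encoding of S1S[E] formulas over `Fin k` as naturals -/
def enc {k : ℕ} : S1SE (Fin k) → ℕ
  | mem τ (Sum.inl X) => Nat.pair 0 (Nat.pair τ.enc X)
  | mem τ (Sum.inr a) => Nat.pair 1 (Nat.pair τ.enc a.val)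
  | eq τ σ => Nat.pair 2 (Nat.pair τ.enc σ.enc)
  | el τ σ => Nat.pair 3 (Nat.pair τ.enc σ.enc)
  | not φ => Nat.pair 4 φ.enc
  | or φ ψ => Nat.pair 5 (Nat.pair φ.enc ψ.enc)
  | exFO x φ => Nat.pair 6 (Nat.pair x φ.enc)
  | exSO X φ => Nat.pair 7 (Nat.pair X φ.enc)

end S1SE

/-! ### Labeled trees -/

/-- An `AP`-labeled tree: an infinite partially ordered set of nodes (given by
the strict ancestor relation `lt`) with a least element `root`, in which the
ancestors of every node are totally ordered and finitely many (so that levels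
are defined), and every node has a direct successor. -/
structure LTree (AP : Type) : Type 1 where
  node : Type
  lt : node → node → Prop
  lt_irrefl : ∀ s, ¬ lt s s
  lt_trans : ∀ a b c, lt a b → lt b c → lt a c
  root : node
  root_min : ∀ s, s = root ∨ lt root s
  anc_total : ∀ s a b, lt a s → lt b s → a = b ∨ lt a b ∨ lt b a
  anc_finite : ∀ s, {a | lt a s}.Finite
  succ_exists : ∀ s, ∃ s', lt s s' ∧ ¬ ∃ c, lt s c ∧ lt c s'
  label : node → Set AP

namespace LTree

variable {AP : Type} (T : LTree AP)

/-- `a` is the direct ancestor of `b` -/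
def DirAnc (a b : T.node) : Prop := T.lt a b ∧ ¬ ∃ c, T.lt a c ∧ T.lt c b

/-- a path: an infinite sequence of nodes, each the direct ancestor of the next -/
def IsPath (p : ℕ → T.node) : Prop := ∀ i, T.DirAnc (p i) (p (i + 1))

/-- an initial path: a path starting at the root -/
def InitPath (p : ℕ → T.node) : Prop := T.IsPath p ∧ p 0 = T.root

/-- the level of a node: its number of ancestors -/
noncomputable def level (s : T.node) : ℕ := (T.anc_finite s).toFinset.card

/-- the collection of node sets that constitute exactly one initial infinite
path of the tree -/
def pathSets : Set (Set T.node) :=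
  { A | ∃ p : ℕ → T.node, T.InitPath p ∧ A = Set.range p }

end LTree

/-- Bisimilarity of `AP`-labeled trees. -/
def Bisimilar {AP : Type} (T₁ T₂ : LTree AP) : Prop :=
  ∃ R : T₁.node → T₂.node → Prop,
    R T₁.root T₂.root ∧
    ∀ s u, R s u →
      T₁.label s = T₂.label u ∧
      (∀ s', T₁.DirAnc s s' → ∃ u', T₂.DirAnc u u' ∧ R s' u') ∧
      (∀ u', T₂.DirAnc u u' → ∃ s', T₁.DirAnc s s' ∧ R s' u')

/-! ### HyperCTL* -/

inductive HCTL (AP : Type) : Type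
  | atom : AP → ℕ → HCTL AP           -- a_π
  | not  : HCTL AP → HCTL AP
  | or   : HCTL AP → HCTL AP → HCTL AP
  | next : HCTL AP → HCTL AP
  | untl : HCTL AP → HCTL AP → HCTL AP
  | ex   : ℕ → HCTL AP → HCTL AP      -- ∃π

namespace HCTL

variable {AP : Type}

/-- HyperCTL* satisfaction `Π,i ⊨_T φ`: `V` assigns initial paths to path
variables, `ε` is the most recently assigned path. -/
def sat (T : LTree AP) : (ℕ → ℕ → T.node) → (ℕ → T.node) → ℕ → HCTL AP → Prop
  | V, ε, i, atom a π => a ∈ T.label (V π i)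
  | V, ε, i, not φ => ¬ sat T V ε i φ
  | V, ε, i, or φ ψ => sat T V ε i φ ∨ sat T V ε i ψ
  | V, ε, i, next φ => sat T V ε (i + 1) φ
  | V, ε, i, untl φ ψ =>
      ∃ j, i ≤ j ∧ sat T V ε j ψ ∧ ∀ k, i ≤ k → k < j → sat T V ε k φ
  | V, ε, i, ex π φ =>
      ∃ p : ℕ → T.node, T.InitPath p ∧ (∀ j ≤ i, p j = ε j) ∧
        sat T (Function.update V π p) p i φ

/-- `T ⊨ φ` -/
def models (T : LTree AP) (φ : HCTL AP) : Prop :=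
  ∀ p : ℕ → T.node, T.InitPath p → sat T (fun _ => p) p 0 φ

def satisfiable (φ : HCTL AP) : Prop := ∃ T : LTree AP, models T φ

def qfree : HCTL AP → Prop
  | atom _ _ => True
  | not φ => qfree φ
  | or φ ψ => qfree φ ∧ qfree ψ
  | next φ => qfree φ
  | untl φ ψ => qfree φ ∧ qfree ψ
  | ex _ _ => False

/-- a natural injective encoding of HyperCTL* formulas over `Fin k` -/
def enc {k : ℕ} : HCTL (Fin k) → ℕ
  | atom a π => Nat.pair 0 (Nat.pair a.val π)
  | not φ => Nat.pair 1 φ.enc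
  | or φ ψ => Nat.pair 2 (Nat.pair φ.enc ψ.enc)
  | next φ => Nat.pair 3 φ.enc
  | untl φ ψ => Nat.pair 4 (Nat.pair φ.enc ψ.enc)
  | ex π φ => Nat.pair 5 (Nat.pair π φ.enc)

end HCTL

/-! ### HyperCTL* in negation normal form -/

inductive NHCTL (AP : Type) : Type
  | pos  : AP → ℕ → NHCTL AP           -- a_π
  | neg  : AP → ℕ → NHCTL AP           -- ¬a_π
  | and  : NHCTL AP → NHCTL AP → NHCTL AP
  | or   : NHCTL AP → NHCTL AP → NHCTL AP
  | next : NHCTL AP → NHCTL AP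
  | untl : NHCTL AP → NHCTL AP → NHCTL AP
  | rel  : NHCTL AP → NHCTL AP → NHCTL AP   -- release
  | ex   : ℕ → NHCTL AP → NHCTL AP
  | all  : ℕ → NHCTL AP → NHCTL AP

namespace NHCTL

variable {AP : Type}

def sat (T : LTree AP) : (ℕ → ℕ → T.node) → (ℕ → T.node) → ℕ → NHCTL AP → Prop
  | V, ε, i, pos a π => a ∈ T.label (V π i)
  | V, ε, i, neg a π => a ∉ T.label (V π i)
  | V, ε, i, and φ ψ => sat T V ε i φ ∧ sat T V ε i ψ
  | V, ε, i, or φ ψ => sat T V ε i φ ∨ sat T V ε i ψ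
  | V, ε, i, next φ => sat T V ε (i + 1) φ
  | V, ε, i, untl φ ψ =>
      ∃ j, i ≤ j ∧ sat T V ε j ψ ∧ ∀ k, i ≤ k → k < j → sat T V ε k φ
  | V, ε, i, rel φ ψ =>
      (∀ j, i ≤ j → sat T V ε j ψ) ∨
      ∃ j, i ≤ j ∧ sat T V ε j φ ∧ ∀ k, i ≤ k → k ≤ j → sat T V ε k ψ
  | V, ε, i, ex π φ =>
      ∃ p : ℕ → T.node, T.InitPath p ∧ (∀ j ≤ i, p j = ε j) ∧
        sat T (Function.update V π p) p i φ
  | V, ε, i, all π φ =>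
      ∀ p : ℕ → T.node, T.InitPath p → (∀ j ≤ i, p j = ε j) →
        sat T (Function.update V π p) p i φ

def models (T : LTree AP) (φ : NHCTL AP) : Prop :=
  ∀ p : ℕ → T.node, T.InitPath p → sat T (fun _ => p) p 0 φ

def satisfiable (φ : NHCTL AP) : Prop := ∃ T : LTree AP, models T φ

/-- contains no existential path quantifier -/
def noEx : NHCTL AP → Prop
  | pos _ _ => True
  | neg _ _ => True
  | and φ ψ => noEx φ ∧ noEx ψ
  | or φ ψ => noEx φ ∧ noEx ψ
  | next φ => noEx φ
  | untl φ ψ => noEx φ ∧ noEx ψ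
  | rel φ ψ => noEx φ ∧ noEx ψ
  | ex _ _ => False
  | all _ φ => noEx φ

/-- contains no universal path quantifier -/
def noAll : NHCTL AP → Prop
  | pos _ _ => True
  | neg _ _ => True
  | and φ ψ => noAll φ ∧ noAll ψ
  | or φ ψ => noAll φ ∧ noAll ψ
  | next φ => noAll φ
  | untl φ ψ => noAll φ ∧ noAll ψ
  | rel φ ψ => noAll φ ∧ noAll ψ
  | ex _ φ => noAll φ
  | all _ _ => False

/-- quantifier-free -/
def qf : NHCTL AP → Prop
  | pos _ _ => True
  | neg _ _ => True
  | and φ ψ => qf φ ∧ qf ψ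
  | or φ ψ => qf φ ∧ qf ψ
  | next φ => qf φ
  | untl φ ψ => qf φ ∧ qf ψ
  | rel φ ψ => qf φ ∧ qf ψ
  | ex _ _ => False
  | all _ _ => False

/-- the ∃*∀* fragment: no existential path quantifier occurs in the scope of a
universal path quantifier -/
def eaFrag : NHCTL AP → Prop
  | pos _ _ => True
  | neg _ _ => True
  | and φ ψ => eaFrag φ ∧ eaFrag ψ
  | or φ ψ => eaFrag φ ∧ eaFrag ψ
  | next φ => eaFrag φ
  | untl φ ψ => eaFrag φ ∧ eaFrag ψ
  | rel φ ψ => eaFrag φ ∧ eaFrag ψ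
  | ex _ φ => eaFrag φ
  | all _ φ => noEx φ

/-- a natural injective encoding of NNF HyperCTL* formulas over `Fin k` -/
def enc {k : ℕ} : NHCTL (Fin k) → ℕ
  | pos a π => Nat.pair 0 (Nat.pair a.val π)
  | neg a π => Nat.pair 1 (Nat.pair a.val π)
  | and φ ψ => Nat.pair 2 (Nat.pair φ.enc ψ.enc)
  | or φ ψ => Nat.pair 3 (Nat.pair φ.enc ψ.enc)
  | next φ => Nat.pair 4 φ.enc
  | untl φ ψ => Nat.pair 5 (Nat.pair φ.enc ψ.enc)
  | rel φ ψ => Nat.pair 6 (Nat.pair φ.enc ψ.enc)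
  | ex π φ => Nat.pair 7 (Nat.pair π φ.enc)
  | all π φ => Nat.pair 8 (Nat.pair π φ.enc)

end NHCTL

/-! ### MSO[E] and MPL[E] over labeled trees -/

inductive MSOE (AP : Type) : Type
  | patom : AP → ℕ → MSOE AP           -- P_a(x)
  | lt    : ℕ → ℕ → MSOE AP            -- x < y  (proper ancestor)
  | eq    : ℕ → ℕ → MSOE AP            -- x = y
  | el    : ℕ → ℕ → MSOE AP            -- E(x,y)
  | mem   : ℕ → ℕ → MSOE AP            -- x ∈ X
  | not   : MSOE AP → MSOE AP
  | or    : MSOE AP → MSOE AP → MSOE AP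
  | exFO  : ℕ → MSOE AP → MSOE AP      -- ∃x
  | exSO  : ℕ → MSOE AP → MSOE AP      -- ∃X

namespace MSOE

variable {AP : Type}

/-- satisfaction over a labeled tree, where second-order quantifiers range over
the collection `SO` of admissible node sets -/
def sat (T : LTree AP) (SO : Set (Set T.node)) :
    (ℕ → T.node) → (ℕ → Set T.node) → MSOE AP → Prop
  | v1, v2, patom a x => a ∈ T.label (v1 x)
  | v1, v2, lt x y => T.lt (v1 x) (v1 y)
  | v1, v2, eq x y => v1 x = v1 y
  | v1, v2, el x y => T.level (v1 x) = T.level (v1 y)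
  | v1, v2, mem x X => v1 x ∈ v2 X
  | v1, v2, not φ => ¬ sat T SO v1 v2 φ
  | v1, v2, or φ ψ => sat T SO v1 v2 φ ∨ sat T SO v1 v2 ψ
  | v1, v2, exFO x φ => ∃ s : T.node, sat T SO (Function.update v1 x s) v2 φ
  | v1, v2, exSO X φ => ∃ A ∈ SO, sat T SO v1 (Function.update v2 X A) φ

def freeFO : MSOE AP → Finset ℕ
  | patom _ x => {x}
  | lt x y => {x, y}
  | eq x y => {x, y}
  | el x y => {x, y}
  | mem x _ => {x}
  | not φ => freeFO φ
  | or φ ψ => freeFO φ ∪ freeFO ψ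
  | exFO x φ => (freeFO φ).erase x
  | exSO _ φ => freeFO φ

def freeSO : MSOE AP → Finset ℕ
  | patom _ _ => ∅
  | lt _ _ => ∅
  | eq _ _ => ∅
  | el _ _ => ∅
  | mem _ X => {X}
  | not φ => freeSO φ
  | or φ ψ => freeSO φ ∪ freeSO ψ
  | exFO _ φ => freeSO φ
  | exSO X φ => (freeSO φ).erase X

def closed (φ : MSOE AP) : Prop := φ.freeFO = ∅ ∧ φ.freeSO = ∅

/-- `T ⊨ φ` with MPL[E] semantics: second-order quantification restricted to
sets of nodes constituting exactly one initial infinite path -/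
def modelsMPL (T : LTree AP) (φ : MSOE AP) : Prop :=
  sat T T.pathSets (fun _ => T.root) (fun _ => (∅ : Set T.node)) φ

/-- `T ⊨ φ` with full MSO[E] semantics: second-order quantification over
arbitrary sets of nodes -/
def modelsMSO (T : LTree AP) (φ : MSOE AP) : Prop :=
  sat T Set.univ (fun _ => T.root) (fun _ => (∅ : Set T.node)) φ

end MSOE

/-! ### HyperQCTL* -/

inductive HQCTL (AP : Type) : Type
  | atom  : AP → ℕ → HQCTL AP          -- a_π
  | qatom : ℕ → ℕ → HQCTL AP           -- q_π
  | not   : HQCTL AP → HQCTL AP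
  | or    : HQCTL AP → HQCTL AP → HQCTL AP
  | next  : HQCTL AP → HQCTL AP
  | untl  : HQCTL AP → HQCTL AP → HQCTL AP
  | ex    : ℕ → HQCTL AP → HQCTL AP    -- ∃π
  | exPr  : ℕ → HQCTL AP → HQCTL AP    -- ∃q

namespace HQCTL

variable {AP : Type}

/-- HyperQCTL* satisfaction: `Q` records, for every quantified proposition, the
set of tree nodes currently labeled by it (a relabeling of the tree). -/
def sat (T : LTree AP) : (ℕ → Set T.node) → (ℕ → ℕ → T.node) → (ℕ → T.node) →
    ℕ → HQCTL AP → Prop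
  | Q, V, ε, i, atom a π => a ∈ T.label (V π i)
  | Q, V, ε, i, qatom q π => V π i ∈ Q q
  | Q, V, ε, i, not φ => ¬ sat T Q V ε i φ
  | Q, V, ε, i, or φ ψ => sat T Q V ε i φ ∨ sat T Q V ε i ψ
  | Q, V, ε, i, next φ => sat T Q V ε (i + 1) φ
  | Q, V, ε, i, untl φ ψ =>
      ∃ j, i ≤ j ∧ sat T Q V ε j ψ ∧ ∀ k, i ≤ k → k < j → sat T Q V ε k φ
  | Q, V, ε, i, ex π φ =>
      ∃ p : ℕ → T.node, T.InitPath p ∧ (∀ j ≤ i, p j = ε j) ∧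
        sat T Q (Function.update V π p) p i φ
  | Q, V, ε, i, exPr q φ =>
      ∃ A : Set T.node, sat T (Function.update Q q A) V ε i φ

def models (T : LTree AP) (φ : HQCTL AP) : Prop :=
  ∀ p : ℕ → T.node, T.InitPath p →
    sat T (fun _ => (∅ : Set T.node)) (fun _ => p) p 0 φ

end HQCTL


/-!
The sentence says that some level below the root is labeled `a` throughout. A bisimulation relates
every node to some node of the same level in the other tree, so the sentence is bisimulation
invariant.

On a comb (a root with `P` infinite branches) a HyperCTL* path quantifier chooses a branch at the
root and is trivial elsewhere, so a formula with at most `P - 2` path variables only ever compares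
a set `R` of branches that misses some branch `f`. In the ruler word level `z` lacks exactly the
branch `ν₂(z) mod P`; filling the level `2^T` completely yields a comb satisfying the sentence,
while the ruler comb does not. Restricted to `R`, however, the filled level looks like a level `z`
with `ν₂(z) ≡ f (mod P)`, and every window of length `2^E` of either word recurs in the other
within distance `2^(E+P+2)` of any position. An Ehrenfeucht–Fraïssé argument on windows of lengths
`2^((P+3)e)` then shows that for `T = (P+3)d` no formula of temporal depth `d` tells the two combs
apart.
-/

namespace LTree

variable {AP : Type} (T : LTree AP)

theorem mem_ancestors_iff {a s : T.node} : a ∈ (T.anc_finite s).toFinset ↔ T.lt a s :=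
  Set.Finite.mem_toFinset _

theorem level_lt_level {a s : T.node} (h : T.lt a s) : T.level a < T.level s := by
  refine Finset.card_lt_card ((Finset.ssubset_iff_of_subset fun b hb => ?_).2 ⟨a, ?_, ?_⟩)
  · rw [mem_ancestors_iff] at hb ⊢; exact T.lt_trans _ _ _ hb h
  · rwa [mem_ancestors_iff]
  · rw [mem_ancestors_iff]; exact T.lt_irrefl a

theorem level_eq_zero_iff {s : T.node} : T.level s = 0 ↔ s = T.root := by
  constructor
  · intro h
    rcases T.root_min s with hs | hs
    · exact hs
    · exact absurd (T.level_lt_level hs) (by omega)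
  · rintro rfl
    refine Finset.card_eq_zero.2 (Finset.eq_empty_of_forall_notMem fun a ha => ?_)
    rw [mem_ancestors_iff] at ha
    rcases T.root_min a with rfl | h
    · exact T.lt_irrefl _ ha
    · exact T.lt_irrefl _ (T.lt_trans _ _ _ h ha)

theorem level_root : T.level T.root = 0 := (T.level_eq_zero_iff).2 rfl

theorem level_eq_succ_of_dirAnc {t s : T.node} (h : T.DirAnc t s) :
    T.level s = T.level t + 1 := by
  classical
  have hanc : (T.anc_finite s).toFinset = insert t (T.anc_finite t).toFinset := by
    ext b
    rw [Finset.mem_insert, mem_ancestors_iff, mem_ancestors_iff]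
    constructor
    · intro hb
      rcases T.anc_total s t b h.1 hb with rfl | htb | hbt
      · exact Or.inl rfl
      · exact absurd ⟨b, htb, hb⟩ h.2
      · exact Or.inr hbt
    · rintro (rfl | hbt)
      · exact h.1
      · exact T.lt_trans _ _ _ hbt h.1
  rw [level, hanc, Finset.card_insert_of_notMem (by rw [mem_ancestors_iff]; exact T.lt_irrefl t)]
  rfl

theorem exists_dirAnc_of_level_eq_succ {s : T.node} {n : ℕ} (h : T.level s = n + 1) :
    ∃ t, T.DirAnc t s ∧ T.level t = n := by
  have hne : (T.anc_finite s).toFinset.Nonempty := Finset.card_pos.1 (by rw [← level]; omega)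
  obtain ⟨t, ht, hmax⟩ := Finset.exists_max_image _ T.level hne
  rw [mem_ancestors_iff] at ht
  have hdir : T.DirAnc t s := ⟨ht, fun ⟨c, htc, hcs⟩ =>
    absurd (hmax c ((T.mem_ancestors_iff).2 hcs)) (not_le.2 (T.level_lt_level htc))⟩
  exact ⟨t, hdir, by have := T.level_eq_succ_of_dirAnc hdir; omega⟩

end LTree

section Bisimulation

variable {AP : Type} {T₁ T₂ : LTree AP}

def IsBisimulation (R : T₁.node → T₂.node → Prop) : Prop :=
  R T₁.root T₂.root ∧
    ∀ s u, R s u →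
      T₁.label s = T₂.label u ∧
      (∀ s', T₁.DirAnc s s' → ∃ u', T₂.DirAnc u u' ∧ R s' u') ∧
      (∀ u', T₂.DirAnc u u' → ∃ s', T₁.DirAnc s s' ∧ R s' u')

theorem bisimilar_iff : Bisimilar T₁ T₂ ↔ ∃ R : T₁.node → T₂.node → Prop, IsBisimulation R :=
  Iff.rfl

theorem IsBisimulation.flip {R : T₁.node → T₂.node → Prop} (h : IsBisimulation R) :
    IsBisimulation (flip R) :=
  ⟨h.1, fun u s hsu => ⟨(h.2 s u hsu).1.symm, (h.2 s u hsu).2.2, (h.2 s u hsu).2.1⟩⟩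

theorem IsBisimulation.exists_rel_level_eq {R : T₁.node → T₂.node → Prop}
    (h : IsBisimulation R) (s : T₁.node) : ∃ u, R s u ∧ T₂.level u = T₁.level s := by
  suffices ∀ n s, T₁.level s = n → ∃ u, R s u ∧ T₂.level u = n from this _ s rfl
  intro n
  induction n with
  | zero =>
    intro s hs
    rw [(T₁.level_eq_zero_iff).1 hs]
    exact ⟨T₂.root, h.1, T₂.level_root⟩
  | succ n ih =>
    intro s hs
    obtain ⟨t, hts, ht⟩ := T₁.exists_dirAnc_of_level_eq_succ hs
    obtain ⟨v, htv, hv⟩ := ih t ht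
    obtain ⟨u, hvu, hsu⟩ := (h.2 t v htv).2.1 s hts
    exact ⟨u, hsu, by rw [T₂.level_eq_succ_of_dirAnc hvu, hv]⟩

theorem Bisimilar.symm (h : Bisimilar T₁ T₂) : Bisimilar T₂ T₁ := by
  obtain ⟨R, hR⟩ := bisimilar_iff.1 h
  exact bisimilar_iff.2 ⟨_, hR.flip⟩

end Bisimulation

section FullLevel

variable {AP : Type}

/-- `∃x. (∃y. y < x) ∧ ∀y. (E(y,x) → P_a(y))` -/
def fullLevelSentence (a : AP) : MSOE AP :=
  .exFO 0 (.not (.or (.not (.exFO 1 (.lt 1 0)))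
    (.exFO 1 (.not (.or (.not (.el 1 0)) (.patom a 1))))))

theorem fullLevelSentence_closed (a : AP) : (fullLevelSentence a).closed :=
  ⟨rfl, rfl⟩

theorem modelsMPL_fullLevelSentence_iff (T : LTree AP) (a : AP) :
    MSOE.modelsMPL T (fullLevelSentence a) ↔
      ∃ s, T.level s ≠ 0 ∧ ∀ u, T.level u = T.level s → a ∈ T.label u := by
  have hroot : ∀ s, (∃ r, T.lt r s) ↔ T.level s ≠ 0 := fun s =>
    ⟨fun ⟨_, hr⟩ => Nat.ne_zero_of_lt (T.level_lt_level hr),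
      fun hs => ⟨T.root, (T.root_min s).resolve_left (mt (T.level_eq_zero_iff).2 hs)⟩⟩
  simp [MSOE.modelsMPL, fullLevelSentence, MSOE.sat, hroot]

theorem modelsMPL_fullLevelSentence_of_bisimilar {T₁ T₂ : LTree AP} (h : Bisimilar T₁ T₂)
    (a : AP) (h₁ : MSOE.modelsMPL T₁ (fullLevelSentence a)) :
    MSOE.modelsMPL T₂ (fullLevelSentence a) := by
  obtain ⟨R, hR⟩ := bisimilar_iff.1 h
  rw [modelsMPL_fullLevelSentence_iff] at h₁ ⊢
  obtain ⟨s, hs, hall⟩ := h₁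
  obtain ⟨u, -, hu⟩ := hR.exists_rel_level_eq s
  refine ⟨u, hu ▸ hs, fun v hv => ?_⟩
  obtain ⟨s', hs'v, hs'⟩ := hR.flip.exists_rel_level_eq v
  rw [← (hR.2 s' v hs'v).1]
  exact hall s' (by rw [hs', hv, hu])

end FullLevel

section Comb

variable {AP ι : Type} [Nonempty ι]

def combLt : Option (ι × ℕ) → Option (ι × ℕ) → Prop
  | none, some _ => True
  | some (c, k), some (c', k') => c = c' ∧ k < k'
  | _, none => False

/-- The comb of a word `u : ℕ → ι → Prop`: a root with one infinite branch per `c : ι`, whose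
node at level `z ≥ 1` is labeled by every proposition if `u z c` and by none otherwise. -/
@[reducible] def comb (u : ℕ → ι → Prop) : LTree AP where
  node := Option (ι × ℕ)
  lt := combLt
  lt_irrefl := by rintro (_ | ⟨c, k⟩) <;> simp [combLt]
  lt_trans := by
    rintro (_ | ⟨a, k⟩) (_ | ⟨b, l⟩) (_ | ⟨c, m⟩) <;> simp only [combLt, imp_self, implies_true,
      false_imp_iff]
    rintro ⟨rfl, h₁⟩ ⟨rfl, h₂⟩
    exact ⟨rfl, h₁.trans h₂⟩
  root := none
  root_min := by rintro (_ | _) <;> simp [combLt]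
  anc_total := by
    rintro (_ | ⟨c, k⟩) (_ | ⟨a, m⟩) (_ | ⟨b, n⟩) <;>
      simp only [combLt, reduceCtorEq, or_self, or_false, or_true, implies_true, IsEmpty.forall_iff,
        Option.some.injEq, Prod.mk.injEq, and_imp]
    rintro rfl - rfl -
    simp only [true_and]
    omega
  anc_finite := by
    rintro (_ | ⟨c, k⟩)
    · exact Set.finite_empty.subset (by rintro (_ | _) h <;> simp [combLt] at h)
    · refine (((Set.finite_Iio k).image fun j => some (c, j)).insert none).subset ?_
      rintro (_ | ⟨a, m⟩) h <;> simp_all [combLt]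
  succ_exists := by
    rintro (_ | ⟨c, k⟩)
    · exact ⟨some (Classical.arbitrary ι, 0), by simp [combLt], by
        rintro ⟨_ | _, h₁, h₂⟩ <;> simp_all [combLt]⟩
    · exact ⟨some (c, k + 1), by simp [combLt], by
        rintro ⟨_ | _, h₁, h₂⟩ <;> simp_all only [combLt, Order.lt_add_one_iff, true_and]
        omega⟩
  label
    | none => ∅
    | some (c, k) => {_a | u (k + 1) c}

def combBranch (c : ι) : ℕ → Option (ι × ℕ)
  | 0 => none
  | k + 1 => some (c, k)

variable (u : ℕ → ι → Prop)

theorem comb_dirAnc_none_iff {y : Option (ι × ℕ)} :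
    (comb u : LTree AP).DirAnc none y ↔ ∃ c, y = some (c, 0) := by
  rcases y with _ | ⟨c, k⟩
  · simp [LTree.DirAnc, comb, combLt]
  · simp only [LTree.DirAnc, comb, combLt, true_and, Option.some.injEq, Prod.mk.injEq,
      exists_eq_left']
    constructor
    · intro h
      by_contra hk
      exact h ⟨some (c, 0), trivial, rfl, by omega⟩
    · rintro rfl ⟨_ | _, h₁, h₂⟩ <;> simp_all

theorem comb_dirAnc_some_iff {c : ι} {k : ℕ} {y : Option (ι × ℕ)} :
    (comb u : LTree AP).DirAnc (some (c, k)) y ↔ y = some (c, k + 1) := by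
  rcases y with _ | ⟨c', k'⟩
  · simp [LTree.DirAnc, comb, combLt]
  · simp only [LTree.DirAnc, comb, combLt, Option.some.injEq, Prod.mk.injEq]
    constructor
    · rintro ⟨⟨rfl, hk⟩, h⟩
      refine ⟨rfl, ?_⟩
      by_contra hk'
      exact h ⟨some (c, k + 1), ⟨rfl, by omega⟩, rfl, by omega⟩
    · rintro ⟨rfl, rfl⟩
      refine ⟨⟨rfl, by omega⟩, ?_⟩
      rintro ⟨_ | _, h₁, h₂⟩ <;> simp_all only [true_and, Order.lt_add_one_iff]
      omega

theorem comb_dirAnc_combBranch (c : ι) (k : ℕ) :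
    (comb u : LTree AP).DirAnc (combBranch c k) (combBranch c (k + 1)) := by
  rcases k with _ | k
  · exact (comb_dirAnc_none_iff u).2 ⟨c, rfl⟩
  · exact (comb_dirAnc_some_iff u).2 rfl

theorem comb_initPath_iff {p : ℕ → Option (ι × ℕ)} :
    (comb u : LTree AP).InitPath p ↔ ∃ c, p = combBranch c := by
  refine ⟨fun ⟨hpath, h0⟩ => ?_, ?_⟩
  · obtain ⟨c, hc⟩ := (comb_dirAnc_none_iff u).1 (h0 ▸ hpath 0)
    refine ⟨c, funext fun i => ?_⟩
    induction i with
    | zero => exact h0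
    | succ i ih =>
      rcases i with _ | i
      · exact hc
      · exact (comb_dirAnc_some_iff u).1 (ih ▸ hpath (i + 1))
  · rintro ⟨c, rfl⟩
    exact ⟨comb_dirAnc_combBranch u c, rfl⟩

theorem comb_level_combBranch (c : ι) (i : ℕ) :
    (comb u : LTree AP).level (combBranch c i) = i := by
  induction i with
  | zero => exact LTree.level_root _
  | succ i ih => rw [LTree.level_eq_succ_of_dirAnc _ (comb_dirAnc_combBranch u c i), ih]

theorem comb_mem_label_combBranch (a : AP) (c : ι) (i : ℕ) :
    a ∈ (comb u : LTree AP).label (combBranch c i) ↔ i ≠ 0 ∧ u i c := by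
  rcases i with _ | i <;> simp [combBranch]

theorem exists_eq_combBranch (x : Option (ι × ℕ)) : ∃ c i, x = combBranch c i := by
  rcases x with _ | ⟨c, k⟩
  · exact ⟨Classical.arbitrary ι, 0, rfl⟩
  · exact ⟨c, k + 1, rfl⟩

theorem modelsMPL_comb_fullLevelSentence_iff (a : AP) :
    MSOE.modelsMPL (comb u) (fullLevelSentence a) ↔ ∃ z ≠ 0, ∀ c, u z c := by
  rw [modelsMPL_fullLevelSentence_iff]
  constructor
  · rintro ⟨s, hs, hall⟩
    obtain ⟨c, z, rfl⟩ := exists_eq_combBranch s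
    rw [comb_level_combBranch] at hs hall
    exact ⟨z, hs, fun c' =>
      ((comb_mem_label_combBranch u a c' z).1 (hall _ (comb_level_combBranch u c' z))).2⟩
  · rintro ⟨z, hz, hall⟩
    refine ⟨combBranch (Classical.arbitrary ι) z, by rwa [comb_level_combBranch], fun s hs => ?_⟩
    obtain ⟨c, z', rfl⟩ := exists_eq_combBranch s
    rw [comb_level_combBranch, comb_level_combBranch] at hs
    subst hs
    exact (comb_mem_label_combBranch u a c z').2 ⟨hz, hall c⟩

end Comb

namespace HCTL

variable {AP : Type}

def vars : HCTL AP → Finset ℕ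
  | atom _ π => {π}
  | not φ => vars φ
  | or φ ψ => vars φ ∪ vars ψ
  | next φ => vars φ
  | untl φ ψ => vars φ ∪ vars ψ
  | ex π φ => insert π (vars φ)

def temporalDepth : HCTL AP → ℕ
  | atom _ _ => 0
  | not φ => temporalDepth φ
  | or φ ψ => max (temporalDepth φ) (temporalDepth ψ)
  | next φ => temporalDepth φ + 1
  | untl φ ψ => max (temporalDepth φ) (temporalDepth ψ) + 1
  | ex _ φ => temporalDepth φ

end HCTL

section CombSat

variable {AP ι : Type} [Nonempty ι] (u : ℕ → ι → Prop)

theorem comb_sat_ex_zero_iff (V : ℕ → ℕ → Option (ι × ℕ)) (e : ι) (π : ℕ) (φ : HCTL AP) :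
    HCTL.sat (comb u) V (combBranch e) 0 (.ex π φ) ↔
      ∃ c, HCTL.sat (comb u) (Function.update V π (combBranch c)) (combBranch c) 0 φ := by
  show (∃ p, _ ∧ _ ∧ _) ↔ _
  constructor
  · rintro ⟨p, hp, -, hsat⟩
    obtain ⟨c, rfl⟩ := (comb_initPath_iff u).1 hp
    exact ⟨c, hsat⟩
  · rintro ⟨c, hsat⟩
    refine ⟨combBranch c, (comb_initPath_iff u).2 ⟨c, rfl⟩, fun k hk => ?_, hsat⟩
    obtain rfl : k = 0 := by omega
    rfl

theorem comb_sat_ex_of_pos (V : ℕ → ℕ → Option (ι × ℕ)) (e : ι) (π : ℕ) (φ : HCTL AP) {i : ℕ}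
    (hi : 0 < i) :
    HCTL.sat (comb u) V (combBranch e) i (.ex π φ) ↔
      HCTL.sat (comb u) (Function.update V π (combBranch e)) (combBranch e) i φ := by
  show (∃ p, _ ∧ _ ∧ _) ↔ _
  constructor
  · rintro ⟨p, hp, hagree, hsat⟩
    obtain ⟨c, rfl⟩ := (comb_initPath_iff u).1 hp
    obtain rfl : c = e := (Prod.mk.inj (Option.some.inj (hagree 1 hi))).1
    exact hsat
  · exact fun hsat => ⟨combBranch e, (comb_initPath_iff u).2 ⟨e, rfl⟩, fun _ _ => rfl, hsat⟩

theorem comb_models_iff (φ : HCTL AP) :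
    HCTL.models (comb u) φ ↔ ∀ c, HCTL.sat (comb u) (fun _ => combBranch c) (combBranch c) 0 φ := by
  refine ⟨fun h c => h _ ((comb_initPath_iff u).2 ⟨c, rfl⟩), fun h p hp => ?_⟩
  obtain ⟨c, rfl⟩ := (comb_initPath_iff u).1 hp
  exact h c

end CombSat

section Windows

variable {ι : Type*}

def WindowRel (u w : ℕ → ι → Prop) (R : Finset ι) (L i j : ℕ) : Prop :=
  (i = 0 ↔ j = 0) ∧ ∀ t < L, ∀ c ∈ R, u (i + t) c ↔ w (j + t) c

def WindowRecurrent (u w : ℕ → ι → Prop) (R : Finset ι) (L N : ℕ) : Prop :=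
  ∀ i, 0 < i → ∀ lo, ∃ j, lo < j ∧ j ≤ lo + N ∧ ∀ t < L, ∀ c ∈ R, u (i + t) c ↔ w (j + t) c

def fillLevel (u : ℕ → ι → Prop) (g : ℕ) : ℕ → ι → Prop := fun z c => z = g ∨ u z c

variable {u w : ℕ → ι → Prop} {R : Finset ι} {L N i j : ℕ}

theorem fillLevel_iff_of_ne {g z : ℕ} (h : z ≠ g) (c : ι) : fillLevel u g z c ↔ u z c :=
  or_iff_right h

theorem WindowRel.symm (h : WindowRel u w R L i j) : WindowRel w u R L j i :=
  ⟨h.1.symm, fun t ht c hc => (h.2 t ht c hc).symm⟩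

theorem WindowRel.shift {L' : ℕ} (h : WindowRel u w R L' i j) {s : ℕ} (hs : s + L ≤ L') :
    WindowRel u w R L (i + s) (j + s) :=
  ⟨by have := h.1; omega,
    fun t ht c hc => by simpa only [add_assoc] using h.2 (s + t) (by omega) c hc⟩

theorem WindowRecurrent.mono {N' : ℕ} (h : WindowRecurrent u w R L N) (hN : N ≤ N') :
    WindowRecurrent u w R L N' := fun i hi lo => by
  obtain ⟨j, h₁, h₂, h₃⟩ := h i hi lo
  exact ⟨j, h₁, by omega, h₃⟩

theorem WindowRecurrent.exists_windowRel (h : WindowRecurrent u w R L N) (hi : 0 < i) (lo : ℕ) :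
    ∃ j, lo < j ∧ j ≤ lo + N ∧ WindowRel u w R L i j := by
  obtain ⟨j, h₁, h₂, h₃⟩ := h i hi lo
  exact ⟨j, h₁, h₂, by omega, h₃⟩

/-- The forth step of an Ehrenfeucht–Fraïssé game on windows: a move of length at most `N` is
copied exactly, a longer one is answered by a recurring copy of the target window. -/
theorem WindowRel.exists_forth (hrec : WindowRecurrent u w R L N)
    (hrec' : WindowRecurrent w u R L N) (h : WindowRel u w R (L + N) i j) {i' : ℕ}
    (hii' : i ≤ i') :
    ∃ j', j ≤ j' ∧ WindowRel u w R L i' j' ∧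
      ∀ k', j ≤ k' → k' < j' → ∃ k, i ≤ k ∧ k < i' ∧ WindowRel u w R L k k' := by
  by_cases hshort : i' ≤ i + N
  · refine ⟨j + (i' - i), by omega, ?_, fun k' hk₁ hk₂ => ⟨i + (k' - j), by omega, by omega, ?_⟩⟩
    · simpa only [Nat.add_sub_cancel' hii'] using h.shift (s := i' - i) (by omega)
    · simpa only [Nat.add_sub_cancel' hk₁] using h.shift (s := k' - j) (by omega)
  · obtain ⟨j', hj₁, -, hj'⟩ := hrec.exists_windowRel (i := i') (by omega) j
    refine ⟨j', hj₁.le, hj', fun k' hk₁ hk₂ => ?_⟩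
    by_cases hnear : k' ≤ j + N
    · exact ⟨i + (k' - j), by omega, by omega,
        by simpa only [Nat.add_sub_cancel' hk₁] using h.shift (s := k' - j) (by omega)⟩
    · obtain ⟨k, hk₃, hk₄, hk⟩ := hrec'.exists_windowRel (i := k') (by omega) i
      exact ⟨k, hk₃.le, by omega, hk.symm⟩

theorem WindowRel.exists_back (hrec : WindowRecurrent u w R L N)
    (hrec' : WindowRecurrent w u R L N) (h : WindowRel u w R (L + N) i j) {j' : ℕ}
    (hjj' : j ≤ j') :
    ∃ i', i ≤ i' ∧ WindowRel u w R L i' j' ∧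
      ∀ k, i ≤ k → k < i' → ∃ k', j ≤ k' ∧ k' < j' ∧ WindowRel u w R L k k' := by
  obtain ⟨i', hi', hrel, hmid⟩ := h.symm.exists_forth hrec' hrec hjj'
  refine ⟨i', hi', hrel.symm, fun k hk₁ hk₂ => ?_⟩
  obtain ⟨k', hk₃, hk₄, hk⟩ := hmid k hk₁ hk₂
  exact ⟨k', hk₃, hk₄, hk.symm⟩

variable [Fintype ι] in
def MutuallyRecurrent (u w : ℕ → ι → Prop) (L : ℕ → ℕ) (d : ℕ) : Prop :=
  ∀ e < d, ∀ R : Finset ι, R.card < Fintype.card ι →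
    WindowRecurrent u w R (L e) (L (e + 1) - L e) ∧ WindowRecurrent w u R (L e) (L (e + 1) - L e)

end Windows

theorem until_iff_of_forth_back {rel : ℕ → ℕ → Prop} {φ₁ ψ₁ φ₂ ψ₂ : ℕ → Prop} {i j : ℕ}
    (hφ : ∀ k k', rel k k' → (φ₁ k ↔ φ₂ k')) (hψ : ∀ k k', rel k k' → (ψ₁ k ↔ ψ₂ k'))
    (forth : ∀ i', i ≤ i' → ∃ j', j ≤ j' ∧ rel i' j' ∧
      ∀ k', j ≤ k' → k' < j' → ∃ k, i ≤ k ∧ k < i' ∧ rel k k')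
    (back : ∀ j', j ≤ j' → ∃ i', i ≤ i' ∧ rel i' j' ∧
      ∀ k, i ≤ k → k < i' → ∃ k', j ≤ k' ∧ k' < j' ∧ rel k k') :
    (∃ i', i ≤ i' ∧ ψ₁ i' ∧ ∀ k, i ≤ k → k < i' → φ₁ k) ↔
      (∃ j', j ≤ j' ∧ ψ₂ j' ∧ ∀ k', j ≤ k' → k' < j' → φ₂ k') := by
  constructor
  · rintro ⟨i', hi', hψ₁, hφ₁⟩
    obtain ⟨j', hj', hrel, hmid⟩ := forth i' hi'
    refine ⟨j', hj', (hψ _ _ hrel).1 hψ₁, fun k' hk₁ hk₂ => ?_⟩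
    obtain ⟨k, hk₃, hk₄, hk⟩ := hmid k' hk₁ hk₂
    exact (hφ _ _ hk).1 (hφ₁ k hk₃ hk₄)
  · rintro ⟨j', hj', hψ₂, hφ₂⟩
    obtain ⟨i', hi', hrel, hmid⟩ := back j' hj'
    refine ⟨i', hi', (hψ _ _ hrel).2 hψ₂, fun k hk₁ hk₂ => ?_⟩
    obtain ⟨k', hk₃, hk₄, hk⟩ := hmid k hk₁ hk₂
    exact (hφ _ _ hk).2 (hφ₂ k' hk₃ hk₄)

section Transfer

variable {AP ι : Type} [Fintype ι] [Nonempty ι] {u w : ℕ → ι → Prop}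
  {L : ℕ → ℕ} {d : ℕ}

variable (u w L d) in
def SatTransfer (φ : HCTL AP) : Prop :=
  ∀ e ≤ d, φ.temporalDepth ≤ e → ∀ R : Finset ι, R.card < Fintype.card ι →
    ∀ V : ℕ → ι, (∀ π ∈ φ.vars, V π ∈ R) → ∀ c ∈ R, ∀ i j, WindowRel u w R (L e) i j →
      (HCTL.sat (comb u) (combBranch ∘ V) (combBranch c) i φ ↔
        HCTL.sat (comb w) (combBranch ∘ V) (combBranch c) j φ)

theorem satTransfer_atom (hL : StrictMono L) (hL0 : 0 < L 0) (a : AP) (π : ℕ) :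
    SatTransfer u w L d (.atom a π) := by
  intro e _ _ R _ V hV c _ i j hrel
  have hπ := hV π (Finset.mem_singleton_self π)
  have hagree := hrel.2 0 (hL0.trans_le (hL.monotone (Nat.zero_le e))) (V π) hπ
  show a ∈ (comb u).label (combBranch (V π) i) ↔ a ∈ (comb w).label (combBranch (V π) j)
  simp only [add_zero] at hagree
  rw [comb_mem_label_combBranch, comb_mem_label_combBranch, hagree, ne_eq, ne_eq, hrel.1]

theorem SatTransfer.not {φ : HCTL AP} (h : SatTransfer u w L d φ) :
    SatTransfer u w L d (.not φ) :=
  fun e he hd R hR V hV c hc i j hrel => not_congr (h e he hd R hR V hV c hc i j hrel)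

theorem SatTransfer.or {φ ψ : HCTL AP} (hφ : SatTransfer u w L d φ)
    (hψ : SatTransfer u w L d ψ) : SatTransfer u w L d (.or φ ψ) := by
  intro e he hd R hR V hV c hc i j hrel
  simp only [HCTL.temporalDepth, max_le_iff] at hd
  exact or_congr
    (hφ e he hd.1 R hR V (fun π h => hV π (Finset.mem_union_left _ h)) c hc i j hrel)
    (hψ e he hd.2 R hR V (fun π h => hV π (Finset.mem_union_right _ h)) c hc i j hrel)

theorem SatTransfer.next (hL : StrictMono L) {φ : HCTL AP} (h : SatTransfer u w L d φ) :
    SatTransfer u w L d (.next φ) := by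
  intro e he hd R hR V hV c hc i j hrel
  obtain ⟨e, rfl⟩ : ∃ e', e = e' + 1 := ⟨e - 1, by simp only [HCTL.temporalDepth] at hd; omega⟩
  have hstep : 1 + L e ≤ L (e + 1) := by have := hL (Nat.lt_add_one e); omega
  simp only [HCTL.temporalDepth] at hd
  exact h e (by omega) (by omega) R hR V hV c hc
    (i + 1) (j + 1) (hrel.shift hstep)

theorem SatTransfer.untl (hL : StrictMono L)
    (hrec : MutuallyRecurrent u w L d)
    {φ ψ : HCTL AP} (hφ : SatTransfer u w L d φ) (hψ : SatTransfer u w L d ψ) :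
    SatTransfer u w L d (.untl φ ψ) := by
  intro e he hd R hR V hV c hc i j hrel
  obtain ⟨e, rfl⟩ : ∃ e', e = e' + 1 := ⟨e - 1, by simp only [HCTL.temporalDepth] at hd; omega⟩
  simp only [HCTL.temporalDepth, add_le_add_iff_right, max_le_iff] at hd
  obtain ⟨hrec₁, hrec₂⟩ := hrec e (by omega) R hR
  rw [← Nat.add_sub_cancel' (hL.monotone (Nat.le_succ e))] at hrel
  exact until_iff_of_forth_back
    (fun k k' hk => hφ e (by omega) hd.1 R hR V (fun π h => hV π (Finset.mem_union_left _ h))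
      c hc k k' hk)
    (fun k k' hk => hψ e (by omega) hd.2 R hR V (fun π h => hV π (Finset.mem_union_right _ h))
      c hc k k' hk)
    (fun _ hi' => hrel.exists_forth hrec₁ hrec₂ hi')
    (fun _ hj' => hrel.exists_back hrec₁ hrec₂ hj')

/-- A path quantifier at a position `i > 0` can only pick the current branch, while at the
root it picks a fresh branch, which is added to the set of branches in use. -/
theorem SatTransfer.ex [DecidableEq ι] (hL : StrictMono L)
    (hinit : ∀ t < L d, ∀ c, u t c ↔ w t c) {φ : HCTL AP}
    (hcard : φ.vars.card + 2 ≤ Fintype.card ι) (h : SatTransfer u w L d φ) (π : ℕ) : SatTransfer u w L d (.ex π φ) := by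
  intro e he hd R hR V hV c hc i j hrel
  by_cases hi : i = 0
  · subst hi
    obtain rfl : j = 0 := hrel.1.1 rfl
    rw [comb_sat_ex_zero_iff, comb_sat_ex_zero_iff]
    refine exists_congr fun c' => ?_
    rw [← Function.comp_update]
    have hR' : (insert c' (φ.vars.image (Function.update V π c'))).card < Fintype.card ι := by
      have := Finset.card_insert_le c' (φ.vars.image (Function.update V π c'))
      have := φ.vars.card_image_le (f := Function.update V π c')
      omega
    exact h e he hd _ hR' _ (fun π' h' => Finset.mem_insert_of_mem (Finset.mem_image_of_mem _ h'))
      c' (Finset.mem_insert_self _ _) 0 0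
      ⟨Iff.rfl, fun t ht c'' _ => by
        simpa only [zero_add] using hinit t (ht.trans_le (hL.monotone he)) c''⟩
  · rw [comb_sat_ex_of_pos _ _ _ _ _ (Nat.pos_of_ne_zero hi),
      comb_sat_ex_of_pos _ _ _ _ _ (Nat.pos_of_ne_zero (mt hrel.1.2 hi)), ← Function.comp_update]
    refine h e he hd R hR _ (fun π' h' => ?_) c hc i j hrel
    rcases eq_or_ne π' π with rfl | hne
    · rwa [Function.update_self]
    · rw [Function.update_of_ne hne]
      exact hV π' (Finset.mem_insert_of_mem h')

theorem satTransfer_of_card_vars_le [DecidableEq ι] (hL : StrictMono L) (hL0 : 0 < L 0)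
    (hrec : MutuallyRecurrent u w L d)
    (hinit : ∀ t < L d, ∀ c, u t c ↔ w t c) (φ : HCTL AP)
    (hcard : φ.vars.card + 2 ≤ Fintype.card ι) : SatTransfer u w L d φ := by
  have hsub {s t : Finset ℕ} (hst : s ⊆ t) (ht : t.card + 2 ≤ Fintype.card ι) :
      s.card + 2 ≤ Fintype.card ι :=
    (Nat.add_le_add_right (Finset.card_le_card hst) 2).trans ht
  induction φ with
  | atom a π => exact satTransfer_atom hL hL0 a π
  | not φ ih => exact (ih hcard).not
  | or φ ψ ihφ ihψ =>
    exact (ihφ (hsub Finset.subset_union_left hcard)).or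
      (ihψ (hsub Finset.subset_union_right hcard))
  | next φ ih => exact (ih hcard).next hL
  | untl φ ψ ihφ ihψ =>
    exact (ihφ (hsub Finset.subset_union_left hcard)).untl hL hrec
      (ihψ (hsub Finset.subset_union_right hcard))
  | ex π φ ih =>
    have hφ := hsub (Finset.subset_insert π φ.vars) hcard
    exact (ih hφ).ex hL hinit hφ π

end Transfer

theorem Nat.exists_modEq_Ico {m : ℕ} (hm : 0 < m) (lo y : ℕ) :
    ∃ x, lo ≤ x ∧ x < lo + m ∧ x ≡ y [MOD m] := by
  have hlo := Nat.mod_lt lo hm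
  have hy := Nat.mod_lt (y + m - lo % m) hm
  refine ⟨lo + (y + m - lo % m) % m, by omega, by omega, ?_⟩
  calc lo + (y + m - lo % m) % m ≡ lo % m + (y + m - lo % m) [MOD m] :=
        (Nat.mod_modEq lo m).symm.add (Nat.mod_modEq _ m)
    _ = y + m := by omega
    _ ≡ y [MOD m] := Nat.add_modEq_right

section PadicWindows

variable {p : ℕ} [hp : Fact p.Prime]

theorem padicValNat_eq_of_modEq {a b E : ℕ} (ha : a ≠ 0) (hb : b ≠ 0)
    (hab : a ≡ b [MOD p ^ E]) (hE : padicValNat p a < E) :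
    padicValNat p b = padicValNat p a := by
  have hle : padicValNat p a ≤ padicValNat p b :=
    (padicValNat_dvd_iff_le hb).1 ((hab.dvd_iff (pow_dvd_pow p hE.le)).1 pow_padicValNat_dvd)
  have hlt : ¬ padicValNat p a + 1 ≤ padicValNat p b := fun h =>
    pow_succ_padicValNat_not_dvd ha
      ((hab.dvd_iff (pow_dvd_pow p hE)).2 ((padicValNat_dvd_iff_le hb).2 h))
  omega

theorem padicValNat_lt_of_dvd_of_ne {x y E : ℕ} (hx : p ^ E ∣ x) (hy : y ≠ 0) (hxy : x ≠ y)
    (h₁ : x < y + p ^ E) (h₂ : y < x + p ^ E) : padicValNat p y < E := by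
  by_contra! hE
  have hy' : p ^ E ∣ y := (padicValNat_dvd_iff_le hy).2 hE
  rcases hxy.lt_or_gt with hlt | hlt
  · exact absurd (Nat.le_of_dvd (by omega) (Nat.dvd_sub hy' hx)) (by omega)
  · exact absurd (Nat.le_of_dvd (by omega) (Nat.dvd_sub hx hy')) (by omega)

theorem exists_padicValNat_eq (K lo : ℕ) :
    ∃ z, lo < z ∧ z ≤ lo + 2 * p ^ K ∧ padicValNat p z = K := by
  have hpK : 0 < p ^ K := pow_pos hp.out.pos K
  have hval : ∀ c, ¬ p ∣ c → padicValNat p (p ^ K * c) = K := fun c hc => by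
    rw [padicValNat.mul hpK.ne' (by rintro rfl; exact hc (dvd_zero p)),
      padicValNat.prime_pow, padicValNat.eq_zero_of_not_dvd hc, add_zero]
  set c := lo / p ^ K + 1
  have hlt : lo < p ^ K * c := Nat.lt_mul_div_succ lo hpK
  have hle : p ^ K * (lo / p ^ K) ≤ lo := Nat.mul_div_le lo _
  by_cases hc : p ∣ c
  · have hc' : ¬ p ∣ c + 1 := fun h =>
      hp.out.one_lt.ne' (Nat.dvd_one.1 ((Nat.dvd_add_right hc).1 h))
    refine ⟨p ^ K * (c + 1), by nlinarith, ?_, hval _ hc'⟩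
    simp only [c, mul_add, mul_one] at hle ⊢
    omega
  · refine ⟨p ^ K * c, hlt, ?_, hval c hc⟩
    simp only [c, mul_add, mul_one] at hle ⊢
    omega

theorem exists_window_copy_of_no_peak {E y : ℕ} (hy : 0 < y)
    (h : ∀ t < p ^ E, padicValNat p (y + t) < E) (lo : ℕ) :
    ∃ y', lo < y' ∧ y' ≤ lo + p ^ E ∧
      ∀ t < p ^ E, padicValNat p (y' + t) = padicValNat p (y + t) := by
  obtain ⟨y', h₁, h₂, hmod⟩ := Nat.exists_modEq_Ico (pow_pos hp.out.pos E) (lo + 1) y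
  exact ⟨y', by omega, by omega, fun t ht =>
    padicValNat_eq_of_modEq (by omega) (by omega) (hmod.add_right t).symm (h t ht)⟩

theorem exists_window_copy_of_peak {E K y t₀ : ℕ} (hy : 0 < y) (ht₀ : t₀ < p ^ E)
    (hpeak : p ^ E ∣ y + t₀) (hEK : E ≤ K) (lo : ℕ) :
    ∃ y', lo < y' ∧ y' ≤ lo + p ^ (K + 1) ∧ padicValNat p (y' + t₀) = K ∧
      ∀ t < p ^ E, t ≠ t₀ → padicValNat p (y' + t) = padicValNat p (y + t) := by
  obtain ⟨z, hz₁, hz₂, hzK⟩ := exists_padicValNat_eq (p := p) K (lo + t₀)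
  have hz : z - t₀ + t₀ = z := by omega
  have hbound : 2 * p ^ K ≤ p ^ (K + 1) := by
    rw [pow_succ, mul_comm]; exact Nat.mul_le_mul_left _ hp.out.two_le
  have hzE : p ^ E ∣ z := (pow_dvd_pow p hEK).trans (hzK ▸ pow_padicValNat_dvd)
  have hmod : z - t₀ ≡ y [MOD p ^ E] := Nat.ModEq.add_right_cancel' t₀ <| by
    rw [hz]; exact (Nat.modEq_zero_iff_dvd.2 hzE).trans (Nat.modEq_zero_iff_dvd.2 hpeak).symm
  refine ⟨z - t₀, by omega, by omega, by rw [hz, hzK], fun t ht hne => ?_⟩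
  have hlow : padicValNat p (y + t) < E :=
    padicValNat_lt_of_dvd_of_ne hpeak (by omega) (by omega) (by omega) (by omega)
  exact padicValNat_eq_of_modEq (by omega) (by omega) (hmod.add_right t).symm hlow

end PadicWindows

section RulerWord

def rulerWord (P z : ℕ) (c : Fin P) : Prop := z ≠ 0 ∧ (c : ℕ) ≠ padicValNat 2 z % P

variable {P : ℕ}

theorem exists_rulerWord_window_copy (hP : 0 < P) {E y : ℕ} (hy : 0 < y) (lo : ℕ) :
    ∃ y', lo < y' ∧ y' ≤ lo + 2 ^ (E + P) ∧
      ∀ t < 2 ^ E, ∀ c, rulerWord P (y' + t) c ↔ rulerWord P (y + t) c := by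
  suffices ∃ y', lo < y' ∧ y' ≤ lo + 2 ^ (E + P) ∧
      ∀ t < 2 ^ E, padicValNat 2 (y' + t) % P = padicValNat 2 (y + t) % P by
    obtain ⟨y', h₁, h₂, hval⟩ := this
    refine ⟨y', h₁, h₂, fun t ht c => ?_⟩
    unfold rulerWord
    rw [hval t ht]
    omega
  have hEP : 2 ^ E ≤ 2 ^ (E + P) := Nat.pow_le_pow_right two_pos (by omega)
  by_cases hpeak : ∃ t₀ < 2 ^ E, E ≤ padicValNat 2 (y + t₀)
  · obtain ⟨t₀, ht₀, hV⟩ := hpeak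
    obtain ⟨K, hK₁, hK₂, hKmod⟩ := Nat.exists_modEq_Ico hP E (padicValNat 2 (y + t₀))
    obtain ⟨y', h₁, h₂, hK, hrest⟩ := exists_window_copy_of_peak hy ht₀
      ((padicValNat_dvd_iff_le (by omega)).2 hV) hK₁ lo
    have : 2 ^ (K + 1) ≤ 2 ^ (E + P) := Nat.pow_le_pow_right two_pos (by omega)
    refine ⟨y', h₁, by omega, fun t ht => ?_⟩
    rcases eq_or_ne t t₀ with rfl | hne
    · rw [hK]; exact hKmod
    · rw [hrest t ht hne]
  · push Not at hpeak
    obtain ⟨y', h₁, h₂, hval⟩ := exists_window_copy_of_no_peak hy hpeak lo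
    exact ⟨y', h₁, by omega, fun t ht => by rw [hval t ht]⟩

/-- Around the filled level `2^T`, branches other than `f` look exactly like the ruler word
around a level `z` with `ν₂(z) ≡ f (mod P)`, which misses only `f`. -/
theorem exists_rulerWord_window_copy_of_fillLevel (hP : 0 < P) {E T y : ℕ} (hET : E ≤ T)
    (hy : 0 < y) {R : Finset (Fin P)} {f : Fin P} (hf : f ∉ R) (lo : ℕ) :
    ∃ y', lo < y' ∧ y' ≤ lo + 2 ^ (E + P) ∧ ∀ t < 2 ^ E, ∀ c ∈ R,
      fillLevel (rulerWord P) (2 ^ T) (y + t) c ↔ rulerWord P (y' + t) c := by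
  by_cases hg : y ≤ 2 ^ T ∧ 2 ^ T < y + 2 ^ E
  · obtain ⟨K, hK₁, hK₂, hKmod⟩ := Nat.exists_modEq_Ico hP E f
    have hpeak : 2 ^ E ∣ y + (2 ^ T - y) := by
      rw [Nat.add_sub_cancel' hg.1]; exact pow_dvd_pow 2 hET
    obtain ⟨y', h₁, h₂, hK, hrest⟩ := exists_window_copy_of_peak hy (by omega) hpeak hK₁ lo
    have : 2 ^ (K + 1) ≤ 2 ^ (E + P) := Nat.pow_le_pow_right two_pos (by omega)
    refine ⟨y', h₁, by omega, fun t ht c hc => ?_⟩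
    have hcf : (c : ℕ) ≠ f := fun h => hf (Fin.ext h ▸ hc)
    rcases eq_or_ne t (2 ^ T - y) with rfl | hne
    · simp only [fillLevel, rulerWord, hK, Nat.add_sub_cancel' hg.1, true_or, true_iff]
      rw [hKmod, Nat.mod_eq_of_lt f.isLt]
      exact ⟨by omega, hcf⟩
    · rw [fillLevel_iff_of_ne (by omega)]
      simp only [rulerWord, hrest t ht hne]
      omega
  · obtain ⟨y', h₁, h₂, hcopy⟩ := exists_rulerWord_window_copy (E := E) hP hy lo
    refine ⟨y', h₁, h₂, fun t ht c _ => ?_⟩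
    rw [hcopy t ht c, fillLevel_iff_of_ne (by omega)]

theorem windowRecurrent_fillLevel_rulerWord (hP : 0 < P) {E T : ℕ} (hET : E ≤ T)
    {R : Finset (Fin P)} (hR : R.card < P) :
    WindowRecurrent (fillLevel (rulerWord P) (2 ^ T)) (rulerWord P) R (2 ^ E) (2 ^ (E + P)) := by
  obtain ⟨f, -, hf⟩ := Finset.exists_mem_notMem_of_card_lt_card (s := R) (t := Finset.univ)
    (by rwa [Finset.card_univ, Fintype.card_fin])
  exact fun y hy lo => exists_rulerWord_window_copy_of_fillLevel hP hET hy hf lo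

theorem windowRecurrent_rulerWord_fillLevel (hP : 0 < P) (E T : ℕ) (R : Finset (Fin P)) :
    WindowRecurrent (rulerWord P) (fillLevel (rulerWord P) (2 ^ T)) R (2 ^ E)
      (2 ^ (E + P + 2)) := by
  have hpow : 2 ^ E ≤ 2 ^ (E + P) := Nat.pow_le_pow_right two_pos (by omega)
  have hpow' : 2 ^ (E + P + 2) = 4 * 2 ^ (E + P) := by rw [pow_add]; ring
  intro y hy lo
  obtain ⟨y₁, h₁, h₂, hcopy₁⟩ := exists_rulerWord_window_copy (E := E) hP hy lo
  by_cases hg : y₁ ≤ 2 ^ T ∧ 2 ^ T < y₁ + 2 ^ E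
  · obtain ⟨y₂, h₃, h₄, hcopy₂⟩ := exists_rulerWord_window_copy (E := E) hP hy (2 ^ T)
    exact ⟨y₂, by omega, by omega, fun t ht c _ => by
      rw [fillLevel_iff_of_ne (by omega), hcopy₂ t ht]⟩
  · exact ⟨y₁, h₁, by omega, fun t ht c _ => by
      rw [fillLevel_iff_of_ne (by omega), hcopy₁ t ht]⟩

def rulerScale (P e : ℕ) : ℕ := 2 ^ ((P + 3) * e)

theorem strictMono_rulerScale (P : ℕ) : StrictMono (rulerScale P) :=
  fun _ _ h => Nat.pow_lt_pow_right one_lt_two (Nat.mul_lt_mul_of_pos_left h (by omega))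

theorem mutuallyRecurrent_rulerScale (hP : 0 < P) (d : ℕ) :
    MutuallyRecurrent (fillLevel (rulerWord P) (rulerScale P d)) (rulerWord P) (rulerScale P)
      d := by
  intro e he R hR
  rw [Fintype.card_fin] at hR
  have hgap : 2 ^ ((P + 3) * e + P + 2) ≤ rulerScale P (e + 1) - rulerScale P e := by
    have : 2 ^ ((P + 3) * e) ≤ 2 ^ ((P + 3) * e + P + 2) := Nat.pow_le_pow_right two_pos (by omega)
    rw [rulerScale, rulerScale, show (P + 3) * (e + 1) = (P + 3) * e + P + 2 + 1 by ring,
      pow_succ 2 ((P + 3) * e + P + 2)]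
    omega
  have hET : (P + 3) * e ≤ (P + 3) * d := Nat.mul_le_mul_left _ he.le
  exact ⟨(windowRecurrent_fillLevel_rulerWord hP hET hR).mono
      ((Nat.pow_le_pow_right two_pos (by omega)).trans hgap),
    (windowRecurrent_rulerWord_fillLevel hP _ _ R).mono hgap⟩

end RulerWord

theorem comb_models_iff_of_mutuallyRecurrent {AP ι : Type} [Fintype ι] [DecidableEq ι]
    [Nonempty ι] {u w : ℕ → ι → Prop} {L : ℕ → ℕ} {d : ℕ} (hL : StrictMono L) (hL0 : 0 < L 0)
    (hrec : MutuallyRecurrent u w L d)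
    (hinit : ∀ t < L d, ∀ c, u t c ↔ w t c) (φ : HCTL AP)
    (hcard : φ.vars.card + 2 ≤ Fintype.card ι) (hdepth : φ.temporalDepth ≤ d) :
    HCTL.models (comb u) φ ↔ HCTL.models (comb w) φ := by
  rw [comb_models_iff, comb_models_iff]
  refine forall_congr' fun c => satTransfer_of_card_vars_le hL hL0 hrec hinit φ hcard d le_rfl
    hdepth {c} (by rw [Finset.card_singleton]; omega) (fun _ => c)
    (fun _ _ => Finset.mem_singleton_self c) c (Finset.mem_singleton_self c) 0 0
    ⟨Iff.rfl, fun t ht c' _ => ?_⟩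
  simpa only [zero_add] using hinit t ht c'

theorem not_exists_hctl_iff_fullLevelSentence {AP : Type} (a : AP) :
    ¬ ∃ φ : HCTL AP, ∀ T : LTree AP, HCTL.models T φ ↔ MSOE.modelsMPL T (fullLevelSentence a) := by
  rintro ⟨φ, hφ⟩
  set P := φ.vars.card + 2
  set d := φ.temporalDepth
  have hP : 0 < P := by omega
  have hfull : HCTL.models (comb (fillLevel (rulerWord P) (rulerScale P d))) φ :=
    (hφ _).2 ((modelsMPL_comb_fullLevelSentence_iff _ a).2
      ⟨_, (Nat.two_pow_pos _).ne', fun _ => Or.inl rfl⟩)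
  have hruler : ¬ HCTL.models (comb (rulerWord P)) φ := fun h => by
    obtain ⟨z, -, hz⟩ := (modelsMPL_comb_fullLevelSentence_iff _ a).1 ((hφ _).1 h)
    exact (hz ⟨padicValNat 2 z % P, Nat.mod_lt _ hP⟩).2 rfl
  exact hruler ((comb_models_iff_of_mutuallyRecurrent (strictMono_rulerScale P)
    (Nat.two_pow_pos _) (mutuallyRecurrent_rulerScale hP d)
    (fun t ht c => fillLevel_iff_of_ne ht.ne c) φ (by rw [Fintype.card_fin]) le_rfl).1 hfull)

theorem mplE_strictly_more_expressive_than_hyperCTLStar_general (AP : Type)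
    [Nonempty AP] :
    ∃ ψ : MSOE AP, ψ.closed ∧
      (∀ T₁ T₂ : LTree AP, Bisimilar T₁ T₂ →
        (MSOE.modelsMPL T₁ ψ ↔ MSOE.modelsMPL T₂ ψ)) ∧
      ¬ ∃ φ : HCTL AP, ∀ T : LTree AP,
          HCTL.models T φ ↔ MSOE.modelsMPL T ψ := by
  obtain ⟨a⟩ := ‹Nonempty AP›
  exact ⟨fullLevelSentence a, fullLevelSentence_closed a,
    fun _ _ h => ⟨modelsMPL_fullLevelSentence_of_bisimilar h a,
      modelsMPL_fullLevelSentence_of_bisimilar h.symm a⟩,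
    not_exists_hctl_iff_fullLevelSentence a⟩

/-- MPL[E] is strictly more expressive than HyperCTL*, even
when restricted to bisimulation-invariant properties. -/
theorem mplE_strictly_more_expressive_than_hyperCTLStar (AP : Type)
    [Fintype AP] [Nonempty AP] :
    ∃ ψ : MSOE AP, ψ.closed ∧
      (∀ T₁ T₂ : LTree AP, Bisimilar T₁ T₂ →
        (MSOE.modelsMPL T₁ ψ ↔ MSOE.modelsMPL T₂ ψ)) ∧
      ¬ ∃ φ : HCTL AP, ∀ T : LTree AP,
          HCTL.models T φ ↔ MSOE.modelsMPL T ψ :=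
  mplE_strictly_more_expressive_than_hyperCTLStar_general AP
end

section
/- A HyperQPTL formula in the ∀* fragment is satisfiable by some nonempty trace set if and only if it is satisfiable by a trace set containing exactly one trace: for every ∀*-fragment HyperQPTL formula φ, (∃ nonempty trace set T, T ⊨ φ) ↔ (∃ trace t, {t} ⊨ φ). -/
set_option linter.unusedVariables false

theorem HQPTL.qfree_sat_iff {AP : Type} (φ : HQPTL AP) (h : φ.qfree) :
    ∀ (T T' : Set (Trace AP)) (V : ℕ → Trace AP) (P : ℕ → ℕ → Prop) (i : ℕ),
      HQPTL.sat T V P i φ ↔ HQPTL.sat T' V P i φ := by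
  induction φ with
  | atom a π => intros; rfl
  | prop q => intros; rfl
  | not ψ ih => intro T T' V P i; simp only [HQPTL.sat]; rw [ih h T T']
  | or ψ χ ih1 ih2 =>
      intro T T' V P i; simp only [HQPTL.sat]; rw [ih1 h.1 T T', ih2 h.2 T T']
  | next ψ ih => intro T T' V P i; simp only [HQPTL.sat]; rw [ih h T T']
  | untl ψ χ ih1 ih2 =>
      intro T T' V P i; simp only [HQPTL.sat]
      simp only [ih1 h.1 T T', ih2 h.2 T T']
  | exTr π ψ ih => exact h.elim
  | allTr π ψ ih => exact h.elim
  | exPr q ψ ih => exact h.elim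
  | allPr q ψ ih => exact h.elim

theorem HQPTL.allFrag_mono {AP : Type} (φ : HQPTL AP) (h : φ.allFrag) :
    ∀ (S T : Set (Trace AP)), S ⊆ T →
      ∀ (V : ℕ → Trace AP) (P : ℕ → ℕ → Prop) (i : ℕ),
        HQPTL.sat T V P i φ → HQPTL.sat S V P i φ := by
  induction φ with
  | allTr π ψ ih =>
      intro S T hST V P i hs t htS
      exact ih h S T hST _ P i (hs t (hST htS))
  | exPr q ψ ih =>
      intro S T hST V P i hs
      obtain ⟨p, hp⟩ := hs
      exact ⟨p, ih h S T hST V _ i hp⟩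
  | allPr q ψ ih =>
      intro S T hST V P i hs p
      exact ih h S T hST V _ i (hs p)
  | atom a π => intro S T _ V P i hs; exact hs
  | prop q => intro S T _ V P i hs; exact hs
  | not ψ ih =>
      intro S T hST V P i hs
      exact (HQPTL.qfree_sat_iff _ h T S V P i).mp hs
  | or ψ χ ih1 ih2 =>
      intro S T hST V P i hs
      exact (HQPTL.qfree_sat_iff _ h T S V P i).mp hs
  | next ψ ih =>
      intro S T hST V P i hs
      exact (HQPTL.qfree_sat_iff _ h T S V P i).mp hs
  | untl ψ χ ih1 ih2 =>
      intro S T hST V P i hs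
      exact (HQPTL.qfree_sat_iff _ h T S V P i).mp hs
  | exTr π ψ ih => exact h.elim

/-- A ∀*-fragment HyperQPTL formula is satisfiable by some
nonempty trace set iff it is satisfiable by a singleton trace set. -/
theorem hyperQPTL_forallFrag_singleton_model (AP : Type) [Fintype AP]
    (φ : HQPTL AP) (hφ : φ.allFrag) :
    (∃ T : Set (Trace AP), T.Nonempty ∧ HQPTL.models T φ) ↔
      (∃ t : Trace AP, HQPTL.models {t} φ) := by
  constructor
  · rintro ⟨T, ⟨t, htT⟩, hm⟩
    exact ⟨t, HQPTL.allFrag_mono φ hφ {t} T (Set.singleton_subset_iff.mpr htT) _ _ 0 hm⟩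
  · rintro ⟨t, ht⟩
    exact ⟨{t}, Set.singleton_nonempty t, ht⟩
end
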